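/- Fix k ≥ 2 and let λ̄_k = inf_{q∈(0,1)} √( −(k/(2 q^k)) log(1−q²) ). Define G_λ : [−1,1]^k → ℝ ∪ {−∞} by G_λ(q₁,…,q_k) = λ² Π_{i=1}^k q_i + (1/2) Σ_{i=1}^k log(1 − q_i²). If 0 ≤ λ < λ̄_k, then max over [−1,1]^k of G_λ equals 0, and the maximum is attained uniquely at q = (0,…,0). -/

import Mathlib

/-!
By AM-GM, `∏ qᵢ ≤ ∏ |qᵢ| ≤ (1/k) ∑ |qᵢ|ᵏ`, so `G_λ(q)` is at most the average of the diagonal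
values `g(|qᵢ|)`, where `g(t) = G_λ(t,…,t) = λ² tᵏ + (k/2) log(1 − t²)`. The definition of
`λ̄_k` says precisely that `g < 0` on `(0,1)` when `0 ≤ λ < λ̄_k`; since `g(0) = 0`, the average
is `≤ 0`, with equality only when every `qᵢ = 0`.
-/

open MeasureTheory ProbabilityTheory Filter
open scoped ENNReal

noncomputable section

/-- The asymmetric second-moment threshold `λ̄_k = inf_{q∈(0,1)} √(−(k/(2q^k)) log(1−q²))`. -/
def lambdaBar (k : ℕ) : ℝ :=
  sInf {x : ℝ | ∃ q ∈ Set.Ioo (0 : ℝ) 1,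
    x = Real.sqrt (-((k : ℝ) / (2 * q ^ k)) * Real.log (1 - q ^ 2))}

open scoped Classical in
/-- `G_λ(q₁,…,q_k) = λ² Π q_i + (1/2) Σ log(1−q_i²)`, with the convention `log 0 = −∞`. -/
def Gasym (k : ℕ) (lam : ℝ) (q : Fin k → ℝ) : EReal :=
  if ∀ i, 0 < 1 - q i ^ 2 then
    ((lam ^ 2 * ∏ i, q i + 1 / 2 * ∑ i, Real.log (1 - q i ^ 2) : ℝ) : EReal)
  else ⊥

theorem Real.prod_le_sum_abs_pow_card_div {ι : Type*} [Fintype ι] [Nonempty ι] (x : ι → ℝ) :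
    ∏ i, x i ≤ (∑ i, |x i| ^ Fintype.card ι) / Fintype.card ι := by
  set n := Fintype.card ι
  have hn : (n : ℝ) ≠ 0 := by simp [n]
  have root : ∀ i, (|x i| ^ n) ^ (1 / (n : ℝ)) = |x i| := fun i => by
    rw [← Real.rpow_natCast, ← Real.rpow_mul (abs_nonneg _), mul_one_div_cancel hn,
      Real.rpow_one]
  calc ∏ i, x i ≤ ∏ i, |x i| := (le_abs_self _).trans (Finset.abs_prod _ _).le
    _ = ∏ i, (|x i| ^ n) ^ (1 / (n : ℝ)) := by simp only [root]
    _ ≤ ∑ i, 1 / (n : ℝ) * |x i| ^ n :=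
        Real.geom_mean_le_arith_mean_weighted _ _ _ (fun _ _ => by positivity)
          (by simp [n, hn]) (fun _ _ => by positivity)
    _ = (∑ i, |x i| ^ n) / n := by rw [← Finset.mul_sum, one_div_mul_eq_div]

theorem lambdaBar_le {k : ℕ} {t : ℝ} (ht : t ∈ Set.Ioo 0 1) :
    lambdaBar k ≤ Real.sqrt (-((k : ℝ) / (2 * t ^ k)) * Real.log (1 - t ^ 2)) :=
  csInf_le ⟨0, by rintro _ ⟨_, _, rfl⟩; exact Real.sqrt_nonneg _⟩ ⟨t, ht, rfl⟩

def Gdiag (k : ℕ) (lam t : ℝ) : ℝ :=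
  lam ^ 2 * t ^ k + k / 2 * Real.log (1 - t ^ 2)

theorem Gdiag_zero {k : ℕ} (hk : k ≠ 0) (lam : ℝ) : Gdiag k lam 0 = 0 := by
  simp [Gdiag, hk]

theorem Gdiag_neg {k : ℕ} {lam t : ℝ} (hlam0 : 0 ≤ lam) (hlam : lam < lambdaBar k)
    (ht : t ∈ Set.Ioo 0 1) : Gdiag k lam t < 0 := by
  have hsq : lam ^ 2 < -((k : ℝ) / (2 * t ^ k)) * Real.log (1 - t ^ 2) :=
    (Real.lt_sqrt hlam0).1 (hlam.trans_le (lambdaBar_le ht))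
  have hscaled : -((k : ℝ) / (2 * t ^ k)) * Real.log (1 - t ^ 2) * t ^ k
      = -(k / 2 * Real.log (1 - t ^ 2)) := by
    field_simp [(pow_pos ht.1 k).ne']
  calc Gdiag k lam t
      = lam ^ 2 * t ^ k - -((k : ℝ) / (2 * t ^ k)) * Real.log (1 - t ^ 2) * t ^ k := by
        rw [hscaled, Gdiag, sub_neg_eq_add]
    _ < 0 := sub_neg.2 (mul_lt_mul_of_pos_right hsq (pow_pos ht.1 k))

theorem Gdiag_abs_nonpos {k : ℕ} (hk : k ≠ 0) {lam t : ℝ} (hlam0 : 0 ≤ lam)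
    (hlam : lam < lambdaBar k) (ht : |t| < 1) : Gdiag k lam |t| ≤ 0 := by
  rcases eq_or_ne t 0 with rfl | ht0
  · simp [Gdiag_zero hk]
  · exact (Gdiag_neg hlam0 hlam ⟨abs_pos.2 ht0, ht⟩).le

theorem Gasym_le_sum_Gdiag {k : ℕ} (hk : k ≠ 0) (lam : ℝ) (q : Fin k → ℝ) :
    Gasym k lam q ≤ ((∑ i, Gdiag k lam |q i|) / k : ℝ) := by
  have : NeZero k := ⟨hk⟩
  unfold Gasym
  split_ifs
  · refine EReal.coe_le_coe_iff.2 ?_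
    have amgm := Real.prod_le_sum_abs_pow_card_div q
    rw [Fintype.card_fin] at amgm
    have hsplit : (∑ i, Gdiag k lam |q i|) / k
        = lam ^ 2 * ((∑ i, |q i| ^ k) / k) + 1 / 2 * ∑ i, Real.log (1 - q i ^ 2) := by
      simp only [Gdiag, sq_abs, Finset.sum_add_distrib, ← Finset.mul_sum]
      field_simp
    rw [hsplit]
    gcongr
  · exact bot_le

theorem abs_lt_one_of_Gasym_ne_bot {k : ℕ} {lam : ℝ} {q : Fin k → ℝ} (h : Gasym k lam q ≠ ⊥)
    (i : Fin k) : |q i| < 1 := by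
  unfold Gasym at h
  split_ifs at h with hq
  · exact (sq_lt_one_iff_abs_lt_one _).1 (by linarith [hq i])
  · exact absurd rfl h

theorem sum_Gdiag_abs_nonpos {k : ℕ} (hk : k ≠ 0) {lam : ℝ} (hlam0 : 0 ≤ lam)
    (hlam : lam < lambdaBar k) {q : Fin k → ℝ} (hq : ∀ i, |q i| < 1) :
    ∑ i, Gdiag k lam |q i| ≤ 0 :=
  Finset.sum_nonpos fun i _ => Gdiag_abs_nonpos hk hlam0 hlam (hq i)

theorem eq_zero_of_sum_Gdiag_abs_nonneg {k : ℕ} (hk : k ≠ 0) {lam : ℝ} (hlam0 : 0 ≤ lam)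
    (hlam : lam < lambdaBar k) {q : Fin k → ℝ} (hq : ∀ i, |q i| < 1)
    (hsum : 0 ≤ ∑ i, Gdiag k lam |q i|) : q = 0 := by
  have hzero := (Finset.sum_eq_zero_iff_of_nonpos fun i _ =>
    Gdiag_abs_nonpos hk hlam0 hlam (hq i)).1
      (le_antisymm (sum_Gdiag_abs_nonpos hk hlam0 hlam hq) hsum)
  funext i
  by_contra hqi
  exact (Gdiag_neg hlam0 hlam ⟨abs_pos.2 hqi, hq i⟩).ne (hzero i (Finset.mem_univ i))

/-- for `0 ≤ λ < λ̄_k`, the maximum of `G_λ` over `[−1,1]^k` equals `0` and is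
attained uniquely at `q = 0`. -/
theorem Gasym_max_at_zero
    (k : ℕ) (hk : 2 ≤ k) (lam : ℝ) (hlam0 : 0 ≤ lam) (hlam : lam < lambdaBar k) :
    (∀ q : Fin k → ℝ, (∀ i, q i ∈ Set.Icc (-1 : ℝ) 1) → Gasym k lam q ≤ 0) ∧
    Gasym k lam 0 = 0 ∧
    (∀ q : Fin k → ℝ, (∀ i, q i ∈ Set.Icc (-1 : ℝ) 1) → Gasym k lam q = 0 → q = 0) := by
  have hk0 : k ≠ 0 := by omega
  refine ⟨fun q _ => ?_, by simp [Gasym, hk0], fun q _ hG => ?_⟩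
  · rcases eq_or_ne (Gasym k lam q) ⊥ with hbot | hne
    · exact hbot ▸ bot_le
    have hq := abs_lt_one_of_Gasym_ne_bot hne
    calc Gasym k lam q ≤ ((∑ i, Gdiag k lam |q i|) / k : ℝ) := Gasym_le_sum_Gdiag hk0 lam q
      _ ≤ 0 := EReal.coe_nonpos.2 <|
          div_nonpos_of_nonpos_of_nonneg (sum_Gdiag_abs_nonpos hk0 hlam0 hlam hq) k.cast_nonneg
  · have hq := abs_lt_one_of_Gasym_ne_bot (hG ▸ EReal.zero_ne_bot)
    have hmean : (0 : ℝ) ≤ (∑ i, Gdiag k lam |q i|) / k := by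
      have := Gasym_le_sum_Gdiag hk0 lam q
      rwa [hG, ← EReal.coe_zero, EReal.coe_le_coe_iff] at this
    refine eq_zero_of_sum_Gdiag_abs_nonneg hk0 hlam0 hlam hq ?_
    simpa using (le_div_iff₀ (by positivity)).1 hmean

end
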